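/- arXiv:1501.05800 — 5 statements merged into one kernel-verified Lean document; each statement's English description precedes it below -/
import Mathlib

section
/- If a connected Δ-regular graph G on n vertices admits a frozen (Δ+1)-colouring, then all Δ+1 colour classes have the same size and hence n ≡ 0 (mod Δ+1). -/
/-!
In a frozen `(Δ+1)`-colouring of a `Δ`-regular graph, the `Δ` neighbours of a vertex carry all
`Δ` colours other than its own, so each of them exactly once. Hence for colours `i ≠ j` the
edges between the classes `V_i` and `V_j` form a perfect matching, and `|V_i| = |V_j|`.
-/

open Finset

namespace SimpleGraph

variable {V α : Type*}

def IsFrozenColoring (G : SimpleGraph V) (γ : V → α) : Prop :=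
  (∀ u v, G.Adj u v → γ u ≠ γ v) ∧ ∀ v c, c ≠ γ v → ∃ u, G.Adj v u ∧ γ u = c

namespace IsFrozenColoring

variable [Fintype V] {G : SimpleGraph V} [DecidableRel G.Adj] [Fintype α] [DecidableEq α]
  {γ : V → α}

theorem injOn_neighborFinset (hγ : G.IsFrozenColoring γ) {v : V}
    (hdeg : G.degree v < Fintype.card α) : Set.InjOn γ (G.neighborFinset v) := by
  refine injOn_of_surjOn_of_card_le γ (t := univ.erase (γ v)) ?_ ?_ ?_
  · intro u hu
    simpa using hγ.1 u v (G.adj_symm ((G.mem_neighborFinset v u).1 hu))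
  · intro c hc
    obtain ⟨u, hvu, rfl⟩ := hγ.2 v c (by simpa using hc)
    exact ⟨u, (G.mem_neighborFinset v u).2 hvu, rfl⟩
  · rw [card_erase_of_mem (mem_univ _), card_univ, card_neighborFinset_eq_degree]
    omega

theorem existsUnique_adj_eq (hγ : G.IsFrozenColoring γ) {v : V}
    (hdeg : G.degree v < Fintype.card α) {c : α} (hc : c ≠ γ v) :
    ∃! u, G.Adj v u ∧ γ u = c := by
  obtain ⟨u, hvu, hu⟩ := hγ.2 v c hc
  refine ⟨u, ⟨hvu, hu⟩, fun w ⟨hvw, hw⟩ => ?_⟩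
  exact hγ.injOn_neighborFinset hdeg (by simpa using hvw) (by simpa using hvu) (hw.trans hu.symm)

theorem card_fiber_eq (hγ : G.IsFrozenColoring γ) (hdeg : ∀ v, G.degree v < Fintype.card α)
    (i j : α) : #{v | γ v = i} = #{v | γ v = j} := by
  obtain rfl | hij := eq_or_ne i j
  · rfl
  have unique_nbr {v c} (hvc : γ v ≠ c) : #{u ∈ ({u | γ u = c} : Finset V) | G.Adj v u} = 1 := by
    obtain ⟨u, hu, huniq⟩ := hγ.existsUnique_adj_eq (hdeg v) (Ne.symm hvc)
    rw [card_eq_one]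
    refine ⟨u, ?_⟩
    ext w
    simp only [mem_filter, mem_univ, true_and, mem_singleton]
    exact ⟨fun ⟨hw, hvw⟩ => huniq w ⟨hvw, hw⟩, fun h => h ▸ ⟨hu.2, hu.1⟩⟩
  -- double counting the `V_i`–`V_j` edges, each vertex lying on exactly one of them
  simpa using card_mul_eq_card_mul G.Adj (m := 1) (n := 1)
    (fun a ha => unique_nbr (by simpa [(mem_filter.1 ha).2] using hij))
    (fun b hb => by
      simp only [bipartiteBelow, G.adj_comm _ b]
      exact unique_nbr (by simpa [(mem_filter.1 hb).2] using hij.symm))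

end IsFrozenColoring

end SimpleGraph

theorem Fintype.card_eq_card_mul_card_fiber {V α : Type*} [Fintype V] [Fintype α] [DecidableEq α]
    {γ : V → α} (h : ∀ i j, #{v | γ v = i} = #{v | γ v = j}) (i : α) :
    Fintype.card V = Fintype.card α * #{v | γ v = i} := by
  rw [← Finset.card_univ, card_eq_sum_card_fiberwise (t := univ) (fun v _ => mem_univ (γ v)),
    Finset.sum_congr rfl fun j _ => h j i, Finset.sum_const, Finset.card_univ, smul_eq_mul]

theorem frozen_regular_colour_classes_general {V : Type} [Fintype V]
    (G : SimpleGraph V) [DecidableRel G.Adj] (Δ : ℕ)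
    (hreg : ∀ v, G.degree v = Δ)
    (γ : V → Fin (Δ + 1))
    (hproper : ∀ u v, G.Adj u v → γ u ≠ γ v)
    (hfrozen : ∀ v : V, ∀ c : Fin (Δ + 1), c ≠ γ v → ∃ u, G.Adj v u ∧ γ u = c) :
    (∀ i j : Fin (Δ + 1),
        (Finset.univ.filter fun v => γ v = i).card
          = (Finset.univ.filter fun v => γ v = j).card) ∧
      (Δ + 1) ∣ Fintype.card V := by
  have hdeg (v : V) : G.degree v < Fintype.card (Fin (Δ + 1)) := by simp [hreg]
  have hclasses := SimpleGraph.IsFrozenColoring.card_fiber_eq ⟨hproper, hfrozen⟩ hdeg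
  refine ⟨hclasses, Dvd.intro #{v | γ v = 0} ?_⟩
  simpa using (Fintype.card_eq_card_mul_card_fiber hclasses 0).symm

/-- If a connected Δ-regular graph admits a frozen (Δ+1)-colouring,
then all Δ+1 colour classes have the same size, and hence (Δ+1) ∣ n. -/
theorem frozen_regular_colour_classes {V : Type} [Fintype V] [DecidableEq V]
    (G : SimpleGraph V) [DecidableRel G.Adj] (Δ : ℕ)
    (hconn : G.Connected) (hreg : ∀ v, G.degree v = Δ)
    (γ : V → Fin (Δ + 1))
    (hproper : ∀ u v, G.Adj u v → γ u ≠ γ v)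
    (hfrozen : ∀ v : V, ∀ c : Fin (Δ + 1), c ≠ γ v → ∃ u, G.Adj v u ∧ γ u = c) :
    (∀ i j : Fin (Δ + 1),
        (Finset.univ.filter fun v => γ v = i).card
          = (Finset.univ.filter fun v => γ v = j).card) ∧
      (Δ + 1) ∣ Fintype.card V :=
  frozen_regular_colour_classes_general G Δ hreg γ hproper hfrozen
end

section
/- Let G be a k-degenerate graph on n vertices and let p_1, ..., p_r be non-negative integers with p_1 + ... + p_r = k − r + 1. Then there exists a partition {V_1, ..., V_r} of V(G) such that the subgraph induced by V_t is p_t-degenerate for each t = 1, ..., r. -/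
/-- The subgraph of `G` induced by `A` is `p`-degenerate. -/
def DegenerateOn {V : Type} [Fintype V] [DecidableEq V] (G : SimpleGraph V)
    [DecidableRel G.Adj] (A : Finset V) (p : ℕ) : Prop :=
  ∀ S : Finset V, S ⊆ A → S.Nonempty → ∃ v ∈ S, (S.filter (G.Adj v)).card ≤ p

/-- `G` is `p`-degenerate. -/
def Degenerate {V : Type} [Fintype V] [DecidableEq V] (G : SimpleGraph V)
    [DecidableRel G.Adj] (p : ℕ) : Prop :=
  ∀ S : Finset V, S.Nonempty → ∃ v ∈ S, (S.filter (G.Adj v)).card ≤ p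

/-- If G is k-degenerate and p_1 + ... + p_r = k - r + 1 (with r ≥ 1,
k ≥ r - 1), then V(G) can be partitioned into sets V_1, ..., V_r with G[V_t]
p_t-degenerate for each t. -/
theorem degenerate_partition {V : Type} [Fintype V] [DecidableEq V]
    (G : SimpleGraph V) [DecidableRel G.Adj] (k r : ℕ) (hr : 1 ≤ r)
    (hk : r - 1 ≤ k) (p : Fin r → ℕ) (hsum : (∑ t, p t) + r = k + 1)
    (hdeg : Degenerate G k) :
    ∃ f : V → Fin r,
      ∀ t : Fin r, DegenerateOn G (Finset.univ.filter fun v => f v = t) (p t) := by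
  suffices h : ∀ A : Finset V, ∃ f : V → Fin r,
      ∀ t : Fin r, DegenerateOn G (A.filter fun v => f v = t) (p t) from h Finset.univ
  intro A
  induction A using Finset.strongInduction with
  | _ A ih =>
    rcases A.eq_empty_or_nonempty with rfl | hA
    · refine ⟨fun _ => ⟨0, hr⟩, fun t S hS hSne => absurd (hS hSne.choose_spec) (by simp)⟩
    obtain ⟨v, hv, hvdeg⟩ := hdeg A hA
    obtain ⟨f, hf⟩ := ih (A.erase v) (Finset.erase_ssubset hv)
    -- find a good color t for v
    have hNk : ((A.erase v).filter (G.Adj v)).card ≤ k := by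
      refine le_trans (Finset.card_le_card (Finset.filter_subset_filter _ (A.erase_subset v)))
        hvdeg
    have hex : ∃ t, (((A.erase v).filter fun u => f u = t).filter (G.Adj v)).card ≤ p t := by
      by_contra hc
      push_neg at hc
      set N := (A.erase v).filter (G.Adj v) with hN
      have hcomm : ∀ t : Fin r, ((A.erase v).filter fun u => f u = t).filter (G.Adj v)
          = N.filter fun u => f u = t := by
        intro t; rw [hN, Finset.filter_comm]
      have hfib : ∑ t : Fin r, (N.filter fun u => f u = t).card = N.card :=
        (Finset.card_eq_sum_card_fiberwise (fun x _ => Finset.mem_univ (f x))).symm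
      have h1 : ∑ t : Fin r, (p t + 1) ≤ ∑ t : Fin r, (N.filter fun u => f u = t).card := by
        refine Finset.sum_le_sum fun t _ => ?_
        have := hc t
        rw [hcomm t] at this
        omega
      rw [Finset.sum_add_distrib, Finset.sum_const, Finset.card_univ, Fintype.card_fin,
        smul_eq_mul, mul_one, hsum, hfib] at h1
      omega
    obtain ⟨t, ht⟩ := hex
    refine ⟨Function.update f v t, fun s S hS hSne => ?_⟩
    by_cases hvS : v ∈ S
    · -- then s = t and v works
      have hfs : Function.update f v t v = s := (Finset.mem_filter.mp (hS hvS)).2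
      rw [Function.update_self] at hfs
      subst hfs
      refine ⟨v, hvS, le_trans (Finset.card_le_card ?_) ht⟩
      intro u hu
      rw [Finset.mem_filter] at hu ⊢
      obtain ⟨huS, hadj⟩ := hu
      have huA := Finset.mem_filter.mp (hS huS)
      have hune : u ≠ v := fun h => G.irrefl (h ▸ hadj)
      refine ⟨Finset.mem_filter.mpr ⟨Finset.mem_erase.mpr ⟨hune, huA.1⟩, ?_⟩, hadj⟩
      have := huA.2
      rwa [Function.update_of_ne hune] at this
    · -- S avoids v, use induction hypothesis
      refine hf s S ?_ hSne
      intro u huS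
      have huA := Finset.mem_filter.mp (hS huS)
      have hune : u ≠ v := fun h => hvS (h ▸ huS)
      refine Finset.mem_filter.mpr ⟨Finset.mem_erase.mpr ⟨hune, huA.1⟩, ?_⟩
      have := huA.2
      rwa [Function.update_of_ne hune] at this
end

section
/- Let G be a graph with maximum degree Δ and suppose γ is a (Δ+1)-colouring such that G is in (Δ+1)-reduced form, i.e., every vertex coloured Δ+1 and all its neighbours are locked. Then any two distinct vertices coloured Δ+1 are at graph distance at least 3 from each other. -/
/-- A vertex `v` is locked (w.r.t. a (Δ+1)-colouring `γ`): Δ distinct colours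
appear on the neighbours of `v`. -/
def Locked {V : Type} [Fintype V] [DecidableEq V] (G : SimpleGraph V)
    [DecidableRel G.Adj] {Δ : ℕ} (γ : V → Fin (Δ + 1)) (v : V) : Prop :=
  Δ ≤ ((Finset.univ.filter (G.Adj v)).image γ).card

/-- If G is in (Δ+1)-reduced form (every vertex coloured Δ+1 is
locked and so are all its neighbours), then any two distinct vertices coloured
Δ+1 are at distance at least 3 (every walk between them has length ≥ 3). -/
theorem reduced_form_dist_three {V : Type} [Fintype V] [DecidableEq V]
    (G : SimpleGraph V) [DecidableRel G.Adj] (Δ : ℕ) (hmax : G.maxDegree = Δ)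
    (γ : V → Fin (Δ + 1))
    (hproper : ∀ u v, G.Adj u v → γ u ≠ γ v)
    (hreduced : ∀ v, γ v = Fin.last Δ →
        Locked G γ v ∧ ∀ u, G.Adj v u → Locked G γ u) :
    ∀ u v : V, u ≠ v → γ u = Fin.last Δ → γ v = Fin.last Δ →
      ∀ p : G.Walk u v, 3 ≤ p.length := by
  have key : ∀ (w u v : V), u ≠ v → γ u = Fin.last Δ → γ v = Fin.last Δ →
      G.Adj w u → G.Adj w v → False := by
    intro w u v huv hu hv hwu hwv
    have hlock : Locked G γ w := (hreduced u hu).2 w hwu.symm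
    set s := Finset.univ.filter (G.Adj w) with hs
    have hscard : s.card ≤ Δ := by
      have := G.degree_le_maxDegree w
      rw [hmax] at this
      simpa [SimpleGraph.degree, SimpleGraph.neighborFinset_eq_filter, hs] using this
    have himg : (s.image γ).card = s.card :=
      le_antisymm Finset.card_image_le (hscard.trans hlock)
    have hinj : Set.InjOn γ s := Finset.card_image_iff.mp himg
    have hu' : u ∈ s := by simp [hs, hwu]
    have hv' : v ∈ s := by simp [hs, hwv]
    exact huv (hinj hu' hv' (hu.trans hv.symm))
  intro u v huv hu hv p
  match p with
  | .nil => exact absurd rfl huv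
  | .cons h .nil => exact absurd (hu.trans hv.symm) (hproper _ _ h)
  | .cons h (.cons h' .nil) => exact absurd (key _ _ _ huv hu hv h.symm h') id
  | .cons _ (.cons _ (.cons _ q)) => simp only [SimpleGraph.Walk.length_cons]; omega
end

section
/- Let G be in (Δ+1)-reduced form with respect to a (Δ+1)-colouring. If G has a (Δ+1)-locked path P, then each endvertex of P is an endvertex of a (Δ+1)-locked path of length 3. -/
open Finset SimpleGraph

namespace Locked

variable {V : Type} [Fintype V] [DecidableEq V] {G : SimpleGraph V} [DecidableRel G.Adj]
  {Δ : ℕ} {γ : V → Fin (Δ + 1)} {x : V}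

theorem injOn_neighborFinset (hx : Locked G γ x) (hdeg : G.degree x ≤ Δ) :
    Set.InjOn γ (G.neighborFinset x) := by
  rw [← card_image_iff]
  refine le_antisymm card_image_le ?_
  calc #(G.neighborFinset x) = G.degree x := card_neighborFinset_eq_degree G x
    _ ≤ Δ := hdeg
    _ ≤ #((G.neighborFinset x).image γ) := by rw [neighborFinset_eq_filter]; exact hx

theorem exists_adj_eq (hproper : ∀ u v, G.Adj u v → γ u ≠ γ v) (hx : Locked G γ x)
    {c : Fin (Δ + 1)} (hc : c ≠ γ x) : ∃ y, G.Adj x y ∧ γ y = c := by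
  have hsub : (univ.filter (G.Adj x)).image γ ⊆ univ.erase (γ x) := by
    simp only [subset_iff, mem_image, mem_filter, mem_univ, true_and, mem_erase, and_true]
    rintro _ ⟨y, hxy, rfl⟩
    exact (hproper x y hxy).symm
  have hcard : #(univ.erase (γ x)) ≤ #((univ.filter (G.Adj x)).image γ) := by
    rw [card_erase_of_mem (mem_univ _), card_univ, Fintype.card_fin, Nat.add_sub_cancel]
    exact hx
  have hc' : c ∈ (univ.filter (G.Adj x)).image γ := by
    rw [eq_of_subset_of_card_le hsub hcard]
    exact mem_erase.mpr ⟨hc, mem_univ c⟩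
  obtain ⟨y, hy, rfl⟩ := mem_image.mp hc'
  exact ⟨y, (mem_filter.mp hy).2, rfl⟩

end Locked

theorem SimpleGraph.Walk.exists_dart_leaving_neighborSet {V : Type} {G : SimpleGraph V}
    {u v : V} (W : G.Walk u v) (hvu : v ≠ u) (huv : ¬G.Adj u v) :
    ∃ d ∈ W.darts, G.Adj u d.fst ∧ d.snd ≠ u ∧ ¬G.Adj u d.snd := by
  obtain ⟨d, hd, hfst, hsnd⟩ :=
    W.exists_boundary_dart (insert u (G.neighborSet u)) (Set.mem_insert u _) (by simp [hvu, huv])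
  simp only [Set.mem_insert_iff, mem_neighborSet, not_or] at hfst hsnd
  refine ⟨d, hd, hfst.resolve_left fun h => hsnd.2 ?_, hsnd⟩
  exact h ▸ d.adj

theorem exists_locked_path_length_three {V : Type} [Fintype V] [DecidableEq V]
    {G : SimpleGraph V} [DecidableRel G.Adj] {Δ : ℕ} (hdeg : G.maxDegree ≤ Δ)
    {γ : V → Fin (Δ + 1)} (hproper : ∀ u v, G.Adj u v → γ u ≠ γ v) {c : Fin (Δ + 1)}
    (hlocked_c : ∀ w, γ w = c → Locked G γ w) {u v : V} (huv : u ≠ v) (W : G.Walk u v)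
    (hu : γ u = c) (hv : γ v = c) (hW : ∀ w ∈ W.support, Locked G γ w) :
    ∃ (w : V) (Q : G.Walk u w), Q.IsPath ∧ Q.length = 3 ∧ γ w = c ∧
      ∀ x ∈ Q.support, Locked G γ x := by
  obtain ⟨⟨⟨a, b⟩, hab⟩, hd, hua, hbu, hub⟩ :=
    W.exists_dart_leaving_neighborSet huv.symm fun h => hproper u v h (hu.trans hv.symm)
  have ha : Locked G γ a := hW a (W.dart_fst_mem_support_of_mem_darts hd)
  have hb : Locked G γ b := hW b (W.dart_snd_mem_support_of_mem_darts hd)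
  have hbc : γ b ≠ c := fun hbc => hbu <|
    ha.injOn_neighborFinset ((G.degree_le_maxDegree a).trans hdeg)
      (by simpa using hab) (by simpa using hua.symm) (hbc.trans hu.symm)
  obtain ⟨w, hbw, hw⟩ := hb.exists_adj_eq hproper hbc.symm
  have hwu : w ≠ u := by rintro rfl; exact hub hbw.symm
  have haw : a ≠ w := by rintro rfl; exact hproper u a hua (hu.trans hw.symm)
  refine ⟨w, .cons hua (.cons hab (.cons hbw .nil)), ?_, rfl, hw, ?_⟩
  · simp [Walk.cons_isPath_iff, hua.ne, hab.ne, hbw.ne, hbu.symm, hwu.symm, haw]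
  · simp only [Walk.support_cons, Walk.support_nil, List.mem_cons, List.not_mem_nil, or_false]
    rintro x (rfl | rfl | rfl | rfl)
    exacts [hlocked_c x hu, ha, hb, hlocked_c x hw]

theorem locked_path_length_three_general {V : Type} [Fintype V] [DecidableEq V]
    (G : SimpleGraph V) [DecidableRel G.Adj] (Δ : ℕ) (hmax : G.maxDegree = Δ)
    (γ : V → Fin (Δ + 1))
    (hproper : ∀ u v, G.Adj u v → γ u ≠ γ v)
    (hreduced : ∀ v, γ v = Fin.last Δ →
        Locked G γ v ∧ ∀ u, G.Adj v u → Locked G γ u)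
    (u v : V) (huv : u ≠ v) (P : G.Walk u v)
    (hu : γ u = Fin.last Δ) (hv : γ v = Fin.last Δ)
    (hlocked : ∀ w ∈ P.support, Locked G γ w) :
    (∃ (w : V) (Q : G.Walk u w), Q.IsPath ∧ Q.length = 3 ∧ γ w = Fin.last Δ ∧
        ∀ x ∈ Q.support, Locked G γ x) ∧
    (∃ (w : V) (Q : G.Walk v w), Q.IsPath ∧ Q.length = 3 ∧ γ w = Fin.last Δ ∧
        ∀ x ∈ Q.support, Locked G γ x) := by
  have hlast : ∀ w, γ w = Fin.last Δ → Locked G γ w := fun w hw => (hreduced w hw).1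
  refine ⟨exists_locked_path_length_three hmax.le hproper hlast huv P hu hv hlocked,
    exists_locked_path_length_three hmax.le hproper hlast huv.symm P.reverse hv hu ?_⟩
  simpa only [Walk.support_reverse, List.mem_reverse] using hlocked

/-- If G is in (Δ+1)-reduced form and has a (Δ+1)-locked path P
(endvertices coloured Δ+1 and every vertex on the path locked), then each
endvertex of P is an endvertex of a (Δ+1)-locked path of length 3. -/
theorem locked_path_length_three {V : Type} [Fintype V] [DecidableEq V]
    (G : SimpleGraph V) [DecidableRel G.Adj] (Δ : ℕ) (hmax : G.maxDegree = Δ)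
    (γ : V → Fin (Δ + 1))
    (hproper : ∀ u v, G.Adj u v → γ u ≠ γ v)
    (hreduced : ∀ v, γ v = Fin.last Δ →
        Locked G γ v ∧ ∀ u, G.Adj v u → Locked G γ u)
    (u v : V) (huv : u ≠ v) (P : G.Walk u v) (hP : P.IsPath)
    (hu : γ u = Fin.last Δ) (hv : γ v = Fin.last Δ)
    (hlocked : ∀ w ∈ P.support, Locked G γ w) :
    (∃ (w : V) (Q : G.Walk u w), Q.IsPath ∧ Q.length = 3 ∧ γ w = Fin.last Δ ∧
        ∀ x ∈ Q.support, Locked G γ x) ∧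
    (∃ (w : V) (Q : G.Walk v w), Q.IsPath ∧ Q.length = 3 ∧ γ w = Fin.last Δ ∧
        ∀ x ∈ Q.support, Locked G γ x) :=
  locked_path_length_three_general G Δ hmax γ hproper hreduced u v huv P hu hv hlocked
end

section
/- Let G be a graph with a (Δ+1)-colouring γ, let i, j be colours with Δ+1 ∉ {i, j}, and let C be the vertex set of a connected component of the subgraph of G induced by colours i and j. Then the colouring γ' obtained from γ by swapping colours i and j on C (γ'(v) = j if v ∈ C and γ(v) = i, γ'(v) = i if v ∈ C and γ(v) = j, γ'(v) = γ(v) otherwise) is a proper (Δ+1)-colouring, and γ' is reachable from γ in R_{Δ+1}(G) by a sequence of at most 3|C| single-vertex recolourings. -/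
/-!
The swap goes through the spare colour `Δ + 1`, which is absent from `C` and its neighbourhood:
the `i`-vertices of `C` move to `Δ + 1`, then the `j`-vertices of `C` move to `i`, and finally
the parked vertices move to `j`. Each stage recolours an independent set none of whose neighbours
carries the target colour (a neighbour of `C` coloured `i` or `j` would lie in `C`), so its
vertices can be recoloured one at a time, for `2|Cᵢ| + |Cⱼ| ≤ 3|C|` moves in total.
-/

/-- `β` is reachable from `α` in the reconfiguration graph of proper
`Fin k`-colourings of `G` by a path of length at most `N`: there is a sequence of
proper colourings, consecutive ones disagreeing on exactly one vertex. -/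
def Reach {V : Type} {k : ℕ} (G : SimpleGraph V) (α β : V → Fin k) (N : ℕ) : Prop :=
  ∃ (m : ℕ) (f : ℕ → V → Fin k), m ≤ N ∧ f 0 = α ∧ f m = β ∧
    (∀ i, i ≤ m → ∀ u v, G.Adj u v → f i u ≠ f i v) ∧
    ∀ i, i < m → ∃! v, f i v ≠ f (i + 1) v

namespace Reach

variable {V : Type} {k : ℕ} {G : SimpleGraph V} {α β δ : V → Fin k} {M N : ℕ}

theorem mono (h : Reach G α β M) (hMN : M ≤ N) : Reach G α β N := by
  obtain ⟨m, f, hm, rest⟩ := h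
  exact ⟨m, f, hm.trans hMN, rest⟩

theorem adj_ne_right (h : Reach G α β N) : ∀ u v, G.Adj u v → β u ≠ β v := by
  obtain ⟨m, f, -, -, rfl, hf, -⟩ := h
  exact hf m le_rfl

theorem refl (hα : ∀ u v, G.Adj u v → α u ≠ α v) : Reach G α α 0 :=
  ⟨0, fun _ => α, le_rfl, rfl, rfl, fun _ _ => hα, fun _ h => absurd h (Nat.not_lt_zero _)⟩

theorem trans (h₁ : Reach G α β M) (h₂ : Reach G β δ N) : Reach G α δ (M + N) := by
  obtain ⟨m₁, f₁, hm₁, h0₁, he₁, hp₁, hs₁⟩ := h₁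
  obtain ⟨m₂, f₂, hm₂, h0₂, he₂, hp₂, hs₂⟩ := h₂
  set f : ℕ → V → Fin k := fun n => if n ≤ m₁ then f₁ n else f₂ (n - m₁) with hf
  have hf₂ : ∀ n, m₁ ≤ n → f n = f₂ (n - m₁) := by
    intro n hn
    rcases hn.eq_or_lt with rfl | hlt
    · simp [hf, he₁, h0₂]
    · simp [hf, Nat.not_le.2 hlt]
  refine ⟨m₁ + m₂, f, by omega, by simp [hf, h0₁], ?_, ?_, ?_⟩
  · rw [hf₂ _ (by omega), Nat.add_sub_cancel_left, he₂]
  · intro n hn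
    by_cases h : n ≤ m₁
    · simpa [hf, h] using hp₁ n h
    · simpa [hf₂ n (by omega)] using hp₂ (n - m₁) (by omega)
  · intro n hn
    by_cases h : n < m₁
    · simpa [hf, h.le, Nat.succ_le_of_lt h] using hs₁ n h
    · rw [hf₂ n (by omega), hf₂ (n + 1) (by omega), Nat.sub_add_comm (by omega)]
      exact hs₂ (n - m₁) (by omega)

theorem update [DecidableEq V] (hα : ∀ u v, G.Adj u v → α u ≠ α v) {a : V} {b : Fin k}
    (hβ : ∀ u v, G.Adj u v → Function.update α a b u ≠ Function.update α a b v) :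
    Reach G α (Function.update α a b) 1 := by
  by_cases hb : b = α a
  · rw [Function.update_eq_self_iff.2 hb]
    exact (refl hα).mono zero_le_one
  refine ⟨1, fun n => if n = 0 then α else Function.update α a b, le_rfl, rfl, rfl, ?_, ?_⟩
  · intro n _
    dsimp only
    split_ifs
    exacts [hα, hβ]
  · intro n hn
    obtain rfl : n = 0 := Nat.lt_one_iff.1 hn
    refine ⟨a, by simpa using Ne.symm hb, fun v hv => ?_⟩
    by_contra hva
    simp [Function.update_of_ne hva] at hv

end Reach

section Recolour

variable {V K : Type} {G : SimpleGraph V}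

open Classical in
noncomputable def recolour (α : V → K) (A : Set V) (b : K) : V → K :=
  fun v => if v ∈ A then b else α v

theorem recolour_of_mem {α : V → K} {A : Set V} {b : K} {v : V} (hv : v ∈ A) :
    recolour α A b v = b := by
  simp [recolour, hv]

theorem recolour_of_notMem {α : V → K} {A : Set V} {b : K} {v : V} (hv : v ∉ A) :
    recolour α A b v = α v := by
  simp [recolour, hv]

theorem recolour_empty (α : V → K) (b : K) : recolour α ∅ b = α := by
  funext v
  exact recolour_of_notMem (Set.notMem_empty v)

theorem recolour_insert [DecidableEq V] (α : V → K) (A : Set V) (a : V) (b : K) :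
    recolour α (insert a A) b = Function.update (recolour α A b) a b := by
  funext v
  by_cases hv : v = a
  · subst hv
    simp [recolour_of_mem]
  · by_cases hA : v ∈ A
    · simp [recolour_of_mem, hA, hv]
    · simp [recolour_of_notMem, hA, hv]

theorem recolour_adj_ne {α : V → K} {A : Set V} {b : K}
    (hα : ∀ u v, G.Adj u v → α u ≠ α v) (hA : G.IsIndepSet A)
    (hb : ∀ u ∈ A, ∀ v, G.Adj u v → α v ≠ b) :
    ∀ u v, G.Adj u v → recolour α A b u ≠ recolour α A b v := by
  intro u v huv
  by_cases hu : u ∈ A <;> by_cases hv : v ∈ A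
  · exact absurd huv (hA hu hv huv.ne)
  · rw [recolour_of_mem hu, recolour_of_notMem hv]
    exact (hb u hu v huv).symm
  · rw [recolour_of_notMem hu, recolour_of_mem hv]
    exact hb v hv u huv.symm
  · rw [recolour_of_notMem hu, recolour_of_notMem hv]
    exact hα u v huv

theorem reach_recolour {k : ℕ} {α : V → Fin k} {A : Set V} {b : Fin k} (hfin : A.Finite)
    (hα : ∀ u v, G.Adj u v → α u ≠ α v) (hA : G.IsIndepSet A)
    (hb : ∀ u ∈ A, ∀ v, G.Adj u v → α v ≠ b) :
    Reach G α (recolour α A b) A.ncard := by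
  classical
  induction A, hfin using Set.Finite.induction_on with
  | empty => simpa [recolour_empty] using Reach.refl hα
  | @insert a A ha hfin ih =>
    have hA' : G.IsIndepSet A := hA.mono (Set.subset_insert a A)
    have hb' : ∀ u ∈ A, ∀ v, G.Adj u v → α v ≠ b :=
      fun u hu => hb u (Set.mem_insert_of_mem a hu)
    rw [Set.ncard_insert_of_notMem ha hfin, recolour_insert]
    refine (ih hA' hb').trans (Reach.update (recolour_adj_ne hα hA' hb') ?_)
    rw [← recolour_insert]
    exact recolour_adj_ne hα hA hb

end Recolour

theorem SimpleGraph.ConnectedComponent.induce_mk_eq_of_adj {V : Type} {G : SimpleGraph V}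
    {S : Set V} {c : (G.induce S).ConnectedComponent} {u v : V} (hu : u ∈ S) (hv : v ∈ S)
    (hc : (G.induce S).connectedComponentMk ⟨u, hu⟩ = c) (huv : G.Adj u v) :
    (G.induce S).connectedComponentMk ⟨v, hv⟩ = c := by
  rw [← hc]
  exact SimpleGraph.ConnectedComponent.sound (SimpleGraph.Adj.reachable (G := G.induce S) huv.symm)

theorem swap_colours_on_component_general {V : Type} [Fintype V]
    (G : SimpleGraph V) (Δ : ℕ)
    (γ : V → Fin (Δ + 1))
    (hproper : ∀ u v, G.Adj u v → γ u ≠ γ v)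
    (i j : Fin (Δ + 1)) (hij : i ≠ j)
    (S : Set V) (hS : S = {v | γ v = i ∨ γ v = j})
    (c : (G.induce S).ConnectedComponent)
    (C : Set V)
    (hC : C = {v : V | ∃ h : v ∈ S, (G.induce S).connectedComponentMk ⟨v, h⟩ = c})
    (hfar : ∀ v : V, (v ∈ C ∨ ∃ u ∈ C, G.Adj u v) → γ v ≠ Fin.last Δ) :
    ∃ γ' : V → Fin (Δ + 1),
      (∀ v ∈ C, γ v = i → γ' v = j) ∧
      (∀ v ∈ C, γ v = j → γ' v = i) ∧
      (∀ v, v ∉ C → γ' v = γ v) ∧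
      (∀ u v, G.Adj u v → γ' u ≠ γ' v) ∧
      Reach G γ γ' (3 * C.ncard) := by
  have hC_closed : ∀ u ∈ C, ∀ v, G.Adj u v → (γ v = i ∨ γ v = j) → v ∈ C := by
    subst hC hS
    rintro u ⟨hu, hc⟩ v huv hv
    exact ⟨hv, c.induce_mk_eq_of_adj hu hv hc huv⟩
  have hindep : ∀ a, G.IsIndepSet (C ∩ {v | γ v = a}) :=
    fun a u hu v hv _ huv => hproper u v huv (hu.2.trans hv.2.symm)
  set Ai := C ∩ {v | γ v = i}
  set Aj := C ∩ {v | γ v = j}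
  set γ₁ := recolour γ Ai (Fin.last Δ)
  set γ₂ := recolour γ₁ Aj i
  set γ' := recolour γ₂ Ai j
  have r₁ : Reach G γ γ₁ Ai.ncard := reach_recolour (Set.toFinite _) hproper (hindep i)
    fun u hu v huv => hfar v (.inr ⟨u, hu.1, huv⟩)
  have r₂ : Reach G γ₁ γ₂ Aj.ncard := by
    refine reach_recolour (Set.toFinite _) r₁.adj_ne_right (hindep j) fun u hu v huv => ?_
    by_cases hv : v ∈ Ai
    · exact (recolour_of_mem hv).trans_ne (hv.2 ▸ (hfar v (.inl hv.1)).symm)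
    · exact (recolour_of_notMem hv).trans_ne
        fun hvi => hv ⟨hC_closed u hu.1 v huv (.inl hvi), hvi⟩
  have r₃ : Reach G γ₂ γ' Ai.ncard := by
    refine reach_recolour (Set.toFinite _) r₂.adj_ne_right (hindep i) fun u hu v huv => ?_
    by_cases hv : v ∈ Aj
    · exact (recolour_of_mem hv).trans_ne hij
    · have hv' : v ∉ Ai := fun hv' => hindep i hu hv' huv.ne huv
      exact ((recolour_of_notMem hv).trans (recolour_of_notMem hv')).trans_ne
        fun hvj => hv ⟨hC_closed u hu.1 v huv (.inr hvj), hvj⟩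
  refine ⟨γ', fun v hv hvi => recolour_of_mem ⟨hv, hvi⟩, fun v hv hvj => ?_, fun v hv => ?_,
    r₃.adj_ne_right, ((r₁.trans r₂).trans r₃).mono ?_⟩
  · have hv' : v ∉ Ai := fun h => hij (h.2.symm.trans hvj)
    exact (recolour_of_notMem hv').trans (recolour_of_mem ⟨hv, hvj⟩)
  · have hvi : v ∉ Ai := fun h => hv h.1
    have hvj : v ∉ Aj := fun h => hv h.1
    exact (recolour_of_notMem hvi).trans ((recolour_of_notMem hvj).trans (recolour_of_notMem hvi))
  · have hi : Ai.ncard ≤ C.ncard := Set.ncard_le_ncard Set.inter_subset_left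
    have hj : Aj.ncard ≤ C.ncard := Set.ncard_le_ncard Set.inter_subset_left
    omega

/-- swapping two colours i, j ≠ Δ+1 on a connected component C of the
subgraph induced by the vertices coloured i or j gives a proper colouring,
reachable from γ by at most 3|C| single-vertex recolourings (assuming colour Δ+1
is not used on C or on any neighbour of C). -/
theorem swap_colours_on_component {V : Type} [Fintype V] [DecidableEq V]
    (G : SimpleGraph V) [DecidableRel G.Adj] (Δ : ℕ) (hmax : G.maxDegree = Δ)
    (γ : V → Fin (Δ + 1))
    (hproper : ∀ u v, G.Adj u v → γ u ≠ γ v)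
    (i j : Fin (Δ + 1)) (hi : i ≠ Fin.last Δ) (hj : j ≠ Fin.last Δ) (hij : i ≠ j)
    (S : Set V) (hS : S = {v | γ v = i ∨ γ v = j})
    (c : (G.induce S).ConnectedComponent)
    (C : Set V)
    (hC : C = {v : V | ∃ h : v ∈ S, (G.induce S).connectedComponentMk ⟨v, h⟩ = c})
    (hfar : ∀ v : V, (v ∈ C ∨ ∃ u ∈ C, G.Adj u v) → γ v ≠ Fin.last Δ) :
    ∃ γ' : V → Fin (Δ + 1),
      (∀ v ∈ C, γ v = i → γ' v = j) ∧
      (∀ v ∈ C, γ v = j → γ' v = i) ∧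
      (∀ v, v ∉ C → γ' v = γ v) ∧
      (∀ u v, G.Adj u v → γ' u ≠ γ' v) ∧
      Reach G γ γ' (3 * C.ncard) :=
  swap_colours_on_component_general G Δ γ hproper i j hij S hS c C hC hfar
end
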